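/- The splitting field over ℚ of the polynomial f(X) = X·(X² − 8X − 2)·(X² + 2)·(X⁴ − 16X³ − 12X² + 32X + 4) is the 24th cyclotomic field ℚ(ζ₂₄); that is, f splits completely in ℚ(ζ₂₄) and ℚ(ζ₂₄) is generated over ℚ by the roots of f. -/

import Mathlib

/-!
A primitive 24th root of unity `ζ = e^(πi/12)` gives `√2 = ζ³ + ζ²¹ = 2cos(π/4)`,
`√3 = ζ² + ζ²² = 2cos(π/6)` and `√-2 = ζ³ + ζ⁹ = ζ⁶√2`, and conversely
`4ζ = √2 + √2√3 + √-2√3 - √-2`, so `ℚ(ζ₂₄) = ℚ(√2, √3, √-2)`.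
Over this field the roots of `f` are explicit: `0`, `4 ± 3√2`, `±√-2`, and, since over `ℚ(√2)`
the quartic factor is `(X² - (8 + 6√2)X - 2)(X² - (8 - 6√2)X - 2)`, the four numbers
`4 ± 3√2 ± 2√3(1 ± √2)`. So `f` splits in `ℚ(ζ₂₄)`, and `√2`, `√3`, `√-2`, hence `ζ`, are
rational combinations of products of these roots.
-/

open Polynomial

/-- The polynomial `X(X² − 8X − 2)(X² + 2)(X⁴ − 16X³ − 12X² + 32X + 4)` whose
roots are the abscissas of the `4`-torsion points of the elliptic curve
`y² = x³ − 8x² − 2x`. -/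
noncomputable def fourTorsionAbscissaPoly : Polynomial ℚ :=
  X * (X ^ 2 - 8 * X - 2) * (X ^ 2 + 2)
    * (X ^ 4 - 16 * X ^ 3 - 12 * X ^ 2 + 32 * X + 4)

theorem Subalgebra.mem_of_ofNat_mul_mem {K : Type*} [Ring K] [Algebra ℚ K] (S : Subalgebra ℚ K)
    (n : ℕ) [n.AtLeastTwo] {x : K} (h : (ofNat(n) : K) * x ∈ S) : x ∈ S := by
  have hn : (ofNat(n) : ℚ) ≠ 0 := NeZero.ne _
  rw [← map_ofNat (algebraMap ℚ K), ← Algebra.smul_def] at h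
  simpa [inv_smul_smul₀ hn] using S.smul_mem h (ofNat(n) : ℚ)⁻¹

theorem IsPrimitiveRoot.pow_eight_sub_pow_four_add_one {R : Type*} [CommRing R] [IsDomain R]
    {ζ : R} (hζ : IsPrimitiveRoot ζ 24) : ζ ^ 8 - ζ ^ 4 + 1 = 0 := by
  have h12 : ζ ^ 12 = -1 :=
    (hζ.pow_of_dvd (p := 12) (by norm_num) (by norm_num)).eq_neg_one_of_two_right
  have h8 := (hζ.pow_of_dvd (p := 8) (by norm_num) (by norm_num)).geom_sum_eq_zero (by norm_num)
  simp only [Finset.sum_range_succ, Finset.sum_range_zero] at h8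
  linear_combination h8 - ζ ^ 4 * h12

namespace Cyclotomic24

variable {R : Type*} [CommRing R]

def sqrtTwo (ζ : R) : R := ζ ^ 3 + ζ ^ 21

def sqrtThree (ζ : R) : R := ζ ^ 2 + ζ ^ 22

def sqrtNegTwo (ζ : R) : R := ζ ^ 3 + ζ ^ 9

variable {ζ : R}

theorem sqrtTwo_sq (hζ : ζ ^ 8 - ζ ^ 4 + 1 = 0) : sqrtTwo ζ ^ 2 = 2 := by
  unfold sqrtTwo
  linear_combination (-2 - 2 * ζ ^ 4 + ζ ^ 6 + ζ ^ 10 + 2 * ζ ^ 12 + 2 * ζ ^ 16 - ζ ^ 18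
    - ζ ^ 22 + ζ ^ 30 + ζ ^ 34) * hζ

theorem sqrtThree_sq (hζ : ζ ^ 8 - ζ ^ 4 + 1 = 0) : sqrtThree ζ ^ 2 = 3 := by
  unfold sqrtThree
  linear_combination (-3 - 2 * ζ ^ 4 + ζ ^ 8 + 3 * ζ ^ 12 + 2 * ζ ^ 16 - ζ ^ 20 - ζ ^ 24
    + ζ ^ 32 + ζ ^ 36) * hζ

theorem sqrtNegTwo_sq (hζ : ζ ^ 8 - ζ ^ 4 + 1 = 0) : sqrtNegTwo ζ ^ 2 = -2 := by
  unfold sqrtNegTwo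
  linear_combination (2 + 2 * ζ ^ 4 + ζ ^ 6 + ζ ^ 10) * hζ

theorem four_mul_eq (hζ : ζ ^ 8 - ζ ^ 4 + 1 = 0) :
    4 * ζ = sqrtTwo ζ + sqrtTwo ζ * sqrtThree ζ + sqrtNegTwo ζ * sqrtThree ζ - sqrtNegTwo ζ := by
  unfold sqrtTwo sqrtThree sqrtNegTwo
  linear_combination (4 * ζ + 2 * ζ ^ 5 - ζ ^ 9 - ζ ^ 11 - 3 * ζ ^ 13 - ζ ^ 15
    - 2 * ζ ^ 17 - ζ ^ 31 - ζ ^ 35) * hζ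

end Cyclotomic24

section Factorization

variable {K : Type*} [CommRing K] {a b c : K}

theorem X_sub_C_mul_X_sub_C_eq {u v p q : K} (hp : u + v = p) (hq : u * v = q) :
    (X - C u) * (X - C v) = X ^ 2 - C p * X + C q := by
  rw [← hp, ← hq, map_add, map_mul]
  ring

/-- With `a = √2`, `b = √3`, `c = √-2`, the roots of `fourTorsionAbscissaPoly`. -/
def fourTorsionAbscissae (a b c : K) : Multiset K :=
  {0, 4 + 3 * a, 4 - 3 * a, c, -c, 4 + 3 * a + 2 * b * (1 + a), 4 + 3 * a - 2 * b * (1 + a),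
    4 - 3 * a + 2 * b * (1 - a), 4 - 3 * a - 2 * b * (1 - a)}

theorem X_sq_sub_eight_mul_X_sub_two_eq_prod (ha : a ^ 2 = 2) :
    (X ^ 2 - 8 * X - 2 : K[X]) = (X - C (4 + 3 * a)) * (X - C (4 - 3 * a)) := by
  rw [X_sub_C_mul_X_sub_C_eq (p := 8) (q := -2) (by ring) (by linear_combination -9 * ha)]
  simp only [map_ofNat, map_neg]
  ring

theorem X_sq_add_two_eq_prod (hc : c ^ 2 = -2) :
    (X ^ 2 + 2 : K[X]) = (X - C c) * (X - C (-c)) := by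
  rw [X_sub_C_mul_X_sub_C_eq (p := 0) (q := 2) (by ring) (by linear_combination -hc)]
  simp only [map_ofNat, map_zero]
  ring

theorem X_pow_four_sub_sixteen_mul_X_pow_three_eq_prod (ha : a ^ 2 = 2) (hb : b ^ 2 = 3) :
    (X ^ 4 - 16 * X ^ 3 - 12 * X ^ 2 + 32 * X + 4 : K[X]) =
      (X - C (4 + 3 * a + 2 * b * (1 + a))) * (X - C (4 + 3 * a - 2 * b * (1 + a))) *
        ((X - C (4 - 3 * a + 2 * b * (1 - a))) * (X - C (4 - 3 * a - 2 * b * (1 - a)))) := by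
  rw [X_sub_C_mul_X_sub_C_eq (p := 8 + 6 * a) (q := -2) (by ring)
      (by linear_combination (9 - 4 * b ^ 2) * ha - 4 * (3 + 2 * a) * hb),
    X_sub_C_mul_X_sub_C_eq (p := 8 - 6 * a) (q := -2) (by ring)
      (by linear_combination (9 - 4 * b ^ 2) * ha - 4 * (3 - 2 * a) * hb)]
  have hA : C a ^ 2 = (2 : K[X]) := by rw [← map_pow, ha, map_ofNat]
  simp only [map_add, map_sub, map_mul, map_ofNat, map_neg]
  -- the quartic is `(X² - 8X - 2)² - 72X²`
  linear_combination 36 * X ^ 2 * hA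

theorem map_fourTorsionAbscissaPoly_eq_prod [Algebra ℚ K] (ha : a ^ 2 = 2) (hb : b ^ 2 = 3)
    (hc : c ^ 2 = -2) :
    fourTorsionAbscissaPoly.map (algebraMap ℚ K) =
      ((fourTorsionAbscissae a b c).map (X - C ·)).prod := by
  simp only [fourTorsionAbscissaPoly, fourTorsionAbscissae, Polynomial.map_mul, Polynomial.map_sub,
    Polynomial.map_add, Polynomial.map_pow, Polynomial.map_X, Polynomial.map_ofNat,
    X_sq_sub_eight_mul_X_sub_two_eq_prod ha, X_sq_add_two_eq_prod hc,
    X_pow_four_sub_sixteen_mul_X_pow_three_eq_prod ha hb, Multiset.insert_eq_cons,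
    Multiset.map_cons, Multiset.prod_cons, Multiset.map_singleton, Multiset.prod_singleton,
    map_zero, sub_zero]
  ring

theorem mem_of_fourTorsionAbscissae_mem [Algebra ℚ K] {S : Subalgebra ℚ K}
    (h : ∀ r ∈ fourTorsionAbscissae a b c, r ∈ S) : a ∈ S ∧ b ∈ S ∧ c ∈ S := by
  have hc : c ∈ S := h c (by simp [fourTorsionAbscissae])
  have ha : a ∈ S := S.mem_of_ofNat_mul_mem 3 <| by
    simpa using S.sub_mem (h (4 + 3 * a) (by simp [fourTorsionAbscissae])) (ofNat_mem S 4)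
  have hb : b ∈ S := S.mem_of_ofNat_mul_mem 4 <| by
    have := S.sub_mem (S.add_mem (h (4 + 3 * a + 2 * b * (1 + a)) (by simp [fourTorsionAbscissae]))
      (h (4 - 3 * a + 2 * b * (1 - a)) (by simp [fourTorsionAbscissae]))) (ofNat_mem S 8)
    convert this using 1
    ring
  exact ⟨ha, hb, hc⟩

end Factorization

theorem rootSet_fourTorsionAbscissaPoly {K : Type*} [Field K] [Algebra ℚ K] [DecidableEq K]
    {a b c : K} (ha : a ^ 2 = 2) (hb : b ^ 2 = 3) (hc : c ^ 2 = -2) :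
    fourTorsionAbscissaPoly.rootSet K = (fourTorsionAbscissae a b c).toFinset := by
  rw [rootSet_def, aroots_def, map_fourTorsionAbscissaPoly_eq_prod ha hb hc,
    roots_multiset_prod_X_sub_C]

/-- The field generated over `ℚ` by the abscissas of the `4`-torsion points of
the elliptic curve `y² = x³ − 8x² − 2x` is the `24`-th cyclotomic field:
`ℚ(ζ₂₄)` is a splitting field over `ℚ` of the polynomial
`X(X² − 8X − 2)(X² + 2)(X⁴ − 16X³ − 12X² + 32X + 4)`. -/
theorem fourTorsion_splittingField_cyclotomic24 :
    Polynomial.IsSplittingField ℚ (CyclotomicField 24 ℚ)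
      fourTorsionAbscissaPoly := by
  classical
  -- instance search picks `DivisionRing.toRatAlgebra`, for which no cyclotomic instance is found
  have : IsCyclotomicExtension {24} ℚ (CyclotomicField 24 ℚ) :=
    CyclotomicField.isCyclotomicExtension 24 ℚ
  set ζ := IsCyclotomicExtension.zeta 24 ℚ (CyclotomicField 24 ℚ)
  have hζ : IsPrimitiveRoot ζ 24 := IsCyclotomicExtension.zeta_spec 24 ℚ _
  have hΦ := hζ.pow_eight_sub_pow_four_add_one
  have h2 := Cyclotomic24.sqrtTwo_sq hΦ
  have h3 := Cyclotomic24.sqrtThree_sq hΦ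
  have hn2 := Cyclotomic24.sqrtNegTwo_sq hΦ
  refine ⟨map_fourTorsionAbscissaPoly_eq_prod h2 h3 hn2 ▸ Splits.multisetProd (by simp), ?_⟩
  rw [rootSet_fourTorsionAbscissaPoly h2 h3 hn2, eq_top_iff,
    ← IsCyclotomicExtension.adjoin_primitive_root_eq_top hζ, Algebra.adjoin_le_iff,
    Set.singleton_subset_iff]
  obtain ⟨ha, hb, hc⟩ := mem_of_fourTorsionAbscissae_mem (S := Algebra.adjoin ℚ _)
    (a := Cyclotomic24.sqrtTwo ζ) (b := Cyclotomic24.sqrtThree ζ) (c := Cyclotomic24.sqrtNegTwo ζ)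
    fun r hr ↦ Algebra.subset_adjoin (Finset.mem_coe.2 (Multiset.mem_toFinset.2 hr))
  refine Subalgebra.mem_of_ofNat_mul_mem _ 4 ?_
  rw [Cyclotomic24.four_mul_eq hΦ]
  exact sub_mem (add_mem (add_mem ha (mul_mem ha hb)) (mul_mem hc hb)) hc
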